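/- For every integer k ≥ 17, rc(G_k) = 5: there is an edge coloring of G_k with 5 colors making it rainbow connected, but no edge coloring with 4 colors does. -/

import Mathlib

/-- Vertex type of the graph `G_k`: the hub `u`, the vertices `v_1,…,v_k`
and the vertices `w_1,…,w_k` (all `2k+1` vertices distinct). -/
abbrev Vk (k : ℕ) : Type := Unit ⊕ Fin k ⊕ Fin k

/-- The hub vertex `u` of `G_k`. -/
def uVtx (k : ℕ) : Vk k := Sum.inl ()

/-- The vertex `v_i` of `G_k`. -/
def vVtx {k : ℕ} (i : Fin k) : Vk k := Sum.inr (Sum.inl i)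

/-- The vertex `w_i` of `G_k`. -/
def wVtx {k : ℕ} (i : Fin k) : Vk k := Sum.inr (Sum.inr i)

/-- The generating relation for the edges of `G_k`: `u ∼ v_i`, `v_i ∼ w_i` and
`w_i ∼ w_j` (the requirement `i ≠ j` is taken care of by `SimpleGraph.fromRel`,
which discards loops). -/
def GkRel (k : ℕ) : Vk k → Vk k → Prop
  | Sum.inl _, Sum.inr (Sum.inl _) => True
  | Sum.inr (Sum.inl i), Sum.inr (Sum.inr j) => i = j
  | Sum.inr (Sum.inr _), Sum.inr (Sum.inr _) => True
  | _, _ => False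

/-- The graph `G_k`: `u` joined to each `v_i`, `v_i` joined to `w_i`, and
`{w_1,…,w_k}` forming a clique. -/
def Gk (k : ℕ) : SimpleGraph (Vk k) := SimpleGraph.fromRel (GkRel k)

/-- A graph `G` with an edge coloring `c` is *rainbow connected* if every pair of distinct
vertices is joined by a path whose edges all receive distinct colors. -/
def RainbowConnected {α β : Type*} (G : SimpleGraph α) (c : Sym2 α → β) : Prop :=
  ∀ x y : α, x ≠ y → ∃ p : G.Walk x y, p.IsPath ∧ (p.edges.map c).Nodup

/-! With five colors, give every spoke `u v_i w_i` the colors `1, 3`, except one distinguished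
spoke `i₀`, colored `0, 2`, and give every clique edge the color `4`; then
`v_i u v_{i₀} w_{i₀} w_j v_j` is a rainbow path, and all other pairs are joined by short rainbow
paths.

With four colors, a rainbow path has length at most `4`. Since `4 ^ 2 < k`, two spokes `i ≠ j`
get the same pair of colors. A path from `v_i` to `v_j` through `u` that is not `v_i u v_j` has
to run down a third spoke `u v_l w_l` and then through the clique, so it has length at least `5`;
a path avoiding `u` uses both edges `v_i w_i` and `v_j w_j`. Either way a color repeats. -/

open SimpleGraph

section RainbowPath

def RainbowJoined {α β : Type*} (G : SimpleGraph α) (c : Sym2 α → β) (x y : α) : Prop :=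
  ∃ p : G.Walk x y, p.IsPath ∧ (p.edges.map c).Nodup

variable {α β : Type*} {G : SimpleGraph α} {c : Sym2 α → β} {x y : α}

theorem RainbowJoined.symm (h : RainbowJoined G c x y) : RainbowJoined G c y x := by
  obtain ⟨p, hp, hc⟩ := h
  refine ⟨p.reverse, hp.reverse, ?_⟩
  rwa [Walk.edges_reverse, List.map_reverse, List.nodup_reverse]

theorem SimpleGraph.Walk.length_le_card_of_nodup_map [Fintype β] {p : G.Walk x y}
    (h : (p.edges.map c).Nodup) : p.length ≤ Fintype.card β := by
  simpa [Walk.length_edges] using h.length_le_card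

theorem SimpleGraph.Walk.two_le_length_of_not_adj (p : G.Walk x y) (hne : x ≠ y)
    (hadj : ¬ G.Adj x y) : 2 ≤ p.length := by
  by_contra! h
  interval_cases hl : p.length
  · exact hne (Walk.eq_of_length_eq_zero hl)
  · exact hadj (Walk.adj_of_length_eq_one hl)

end RainbowPath

namespace Gk

variable {k : ℕ}

@[simp] theorem vVtx_inj {i j : Fin k} : vVtx i = vVtx (k := k) j ↔ i = j := by simp [vVtx]

@[simp] theorem wVtx_inj {i j : Fin k} : wVtx i = wVtx (k := k) j ↔ i = j := by simp [wVtx]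

@[simp] theorem uVtx_ne_vVtx (i : Fin k) : uVtx k ≠ vVtx i := by simp [uVtx, vVtx]

@[simp] theorem uVtx_ne_wVtx (i : Fin k) : uVtx k ≠ wVtx i := by simp [uVtx, wVtx]

@[simp] theorem vVtx_ne_wVtx (i j : Fin k) : vVtx i ≠ wVtx (k := k) j := by simp [vVtx, wVtx]

@[simp] theorem vVtx_ne_uVtx (i : Fin k) : vVtx i ≠ uVtx k := (uVtx_ne_vVtx i).symm

@[simp] theorem wVtx_ne_uVtx (i : Fin k) : wVtx i ≠ uVtx k := (uVtx_ne_wVtx i).symm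

@[simp] theorem wVtx_ne_vVtx (i j : Fin k) : wVtx i ≠ vVtx (k := k) j := (vVtx_ne_wVtx j i).symm

theorem adj_uVtx_vVtx (i : Fin k) : (Gk k).Adj (uVtx k) (vVtx i) :=
  (fromRel_adj _ _ _).2 ⟨by simp, Or.inl trivial⟩

theorem adj_vVtx_wVtx (i : Fin k) : (Gk k).Adj (vVtx i) (wVtx i) :=
  (fromRel_adj _ _ _).2 ⟨by simp, Or.inl rfl⟩

theorem adj_wVtx_wVtx {i j : Fin k} (h : i ≠ j) : (Gk k).Adj (wVtx i) (wVtx j) :=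
  (fromRel_adj _ _ _).2 ⟨by simpa, Or.inl trivial⟩

theorem adj_uVtx_iff {x : Vk k} : (Gk k).Adj (uVtx k) x ↔ ∃ i, x = vVtx i := by
  rcases x with _ | i | i <;> simp [Gk, fromRel_adj, GkRel, uVtx, vVtx]

theorem adj_vVtx_iff {i : Fin k} {x : Vk k} :
    (Gk k).Adj (vVtx i) x ↔ x = uVtx k ∨ x = wVtx i := by
  rcases x with _ | j | j <;> simp [Gk, fromRel_adj, GkRel, uVtx, vVtx, wVtx, eq_comm]

theorem not_adj_wVtx_vVtx {i j : Fin k} (h : i ≠ j) : ¬ (Gk k).Adj (wVtx i) (vVtx j) := by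
  rw [adj_comm, adj_vVtx_iff]
  simp [h]

theorem mk_uVtx_vVtx_mem_edges_or_four_le_length {j : Fin k}
    (q : (Gk k).Walk (uVtx k) (vVtx j)) (hq : q.IsPath) :
    s(uVtx k, vVtx j) ∈ q.edges ∨ 4 ≤ q.length := by
  obtain ⟨x, hux, r, rfl⟩ := Walk.exists_eq_cons_of_ne (uVtx_ne_vVtx j) q
  obtain ⟨l, rfl⟩ := adj_uVtx_iff.1 hux
  rw [Walk.cons_isPath_iff] at hq
  by_cases hlj : l = j
  · subst hlj
    simp
  obtain ⟨y, hly, s, rfl⟩ := Walk.exists_eq_cons_of_ne (by simpa) r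
  rcases adj_vVtx_iff.1 hly with rfl | rfl
  · simp at hq
  have := s.two_le_length_of_not_adj (wVtx_ne_vVtx l j) (not_adj_wVtx_vVtx hlj)
  right
  simp only [Walk.length_cons]
  omega

theorem mk_vVtx_wVtx_mem_edges {i : Fin k} {y : Vk k} (q : (Gk k).Walk (vVtx i) y)
    (hne : vVtx i ≠ y) (hu : uVtx k ∉ q.support) : s(vVtx i, wVtx i) ∈ q.edges := by
  obtain ⟨x, hix, r, rfl⟩ := Walk.exists_eq_cons_of_ne hne q
  rcases adj_vVtx_iff.1 hix with rfl | rfl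
  · simp at hu
  · simp

theorem spoke_edges_mem_of_isPath {i j : Fin k} (hij : i ≠ j)
    (p : (Gk k).Walk (vVtx i) (vVtx j)) (hp : p.IsPath) (hlen : p.length ≤ 4) :
    (s(uVtx k, vVtx i) ∈ p.edges ∧ s(uVtx k, vVtx j) ∈ p.edges) ∨
      (s(vVtx i, wVtx i) ∈ p.edges ∧ s(vVtx j, wVtx j) ∈ p.edges) := by
  have hvv : vVtx i ≠ vVtx (k := k) j := by simpa
  by_cases hu : uVtx k ∈ p.support
  · have h₁ := mk_uVtx_vVtx_mem_edges_or_four_le_length _ (hp.takeUntil hu).reverse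
    have h₂ := mk_uVtx_vVtx_mem_edges_or_four_le_length _ (hp.dropUntil hu)
    have hpos₁ : 0 < (p.takeUntil _ hu).length :=
      Walk.not_nil_iff_lt_length.1 (Walk.not_nil_of_ne (vVtx_ne_uVtx i))
    have hpos₂ : 0 < (p.dropUntil _ hu).length :=
      Walk.not_nil_iff_lt_length.1 (Walk.not_nil_of_ne (uVtx_ne_vVtx j))
    have hsum : (p.takeUntil _ hu).length + (p.dropUntil _ hu).length = p.length := by
      rw [← Walk.length_append, Walk.take_spec]
    rw [Walk.length_reverse, Walk.edges_reverse, List.mem_reverse] at h₁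
    exact Or.inl ⟨p.edges_takeUntil_subset_edges hu (h₁.resolve_right (by omega)),
      p.edges_dropUntil_subset_edges hu (h₂.resolve_right (by omega))⟩
  · refine Or.inr ⟨mk_vVtx_wVtx_mem_edges p hvv hu, ?_⟩
    have := mk_vVtx_wVtx_mem_edges p.reverse hvv.symm (by simpa using hu)
    rwa [Walk.edges_reverse, List.mem_reverse] at this

theorem not_rainbowConnected {β : Type*} [Fintype β] (hβ : Fintype.card β ≤ 4)
    (hk : Fintype.card β ^ 2 < k) (c : Sym2 (Vk k) → β) : ¬ RainbowConnected (Gk k) c := by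
  intro hc
  obtain ⟨i, j, hij, hcol⟩ := Fintype.exists_ne_map_eq_of_card_lt
    (fun i : Fin k => (c s(uVtx k, vVtx i), c s(vVtx i, wVtx i))) (by simpa [sq] using hk)
  obtain ⟨p, hp, hnd⟩ := hc (vVtx i) (vVtx j) (by simpa)
  have hinj := List.inj_on_of_nodup_map hnd
  rcases spoke_edges_mem_of_isPath hij p hp ((p.length_le_card_of_nodup_map hnd).trans hβ) with
    ⟨h₁, h₂⟩ | ⟨h₁, h₂⟩
  · exact hij (by simpa using hinj h₁ h₂ (Prod.ext_iff.1 hcol).1)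
  · exact hij (by simpa using hinj h₁ h₂ (Prod.ext_iff.1 hcol).2)

def fiveColor (i₀ : Fin k) : Vk k → Vk k → Fin 5
  | Sum.inl _, Sum.inr (Sum.inl i) | Sum.inr (Sum.inl i), Sum.inl _ => if i = i₀ then 0 else 1
  | Sum.inr (Sum.inl i), Sum.inr (Sum.inr _) | Sum.inr (Sum.inr _), Sum.inr (Sum.inl i) =>
      if i = i₀ then 2 else 3
  | _, _ => 4

theorem fiveColor_comm (i₀ : Fin k) (x y : Vk k) : fiveColor i₀ x y = fiveColor i₀ y x := by
  rcases x with _ | x | x <;> rcases y with _ | y | y <;> rfl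

def fiveColoring (i₀ : Fin k) : Sym2 (Vk k) → Fin 5 :=
  Sym2.lift ⟨fiveColor i₀, fiveColor_comm i₀⟩

section FiveColoring

variable (i₀ : Fin k)

@[simp] theorem fiveColoring_uVtx_vVtx (i : Fin k) :
    fiveColoring i₀ s(uVtx k, vVtx i) = if i = i₀ then 0 else 1 := rfl

@[simp] theorem fiveColoring_vVtx_uVtx (i : Fin k) :
    fiveColoring i₀ s(vVtx i, uVtx k) = if i = i₀ then 0 else 1 := rfl

@[simp] theorem fiveColoring_vVtx_wVtx (i j : Fin k) :
    fiveColoring i₀ s(vVtx i, wVtx j) = if i = i₀ then 2 else 3 := rfl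

@[simp] theorem fiveColoring_wVtx_vVtx (i j : Fin k) :
    fiveColoring i₀ s(wVtx j, vVtx i) = if i = i₀ then 2 else 3 := rfl

@[simp] theorem fiveColoring_wVtx_wVtx (i j : Fin k) : fiveColoring i₀ s(wVtx i, wVtx j) = 4 :=
  rfl

theorem rainbowJoined_uVtx_vVtx (j : Fin k) :
    RainbowJoined (Gk k) (fiveColoring i₀) (uVtx k) (vVtx j) :=
  ⟨.cons (adj_uVtx_vVtx j) .nil, by simp [Walk.cons_isPath_iff], by simp⟩

theorem rainbowJoined_uVtx_wVtx (j : Fin k) :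
    RainbowJoined (Gk k) (fiveColoring i₀) (uVtx k) (wVtx j) := by
  refine ⟨.cons (adj_uVtx_vVtx j) (.cons (adj_vVtx_wVtx j) .nil), ?_, ?_⟩
  · simp [Walk.cons_isPath_iff]
  · by_cases hj : j = i₀ <;> simp [hj]

theorem rainbowJoined_vVtx_wVtx (i j : Fin k) :
    RainbowJoined (Gk k) (fiveColoring i₀) (vVtx i) (wVtx j) := by
  by_cases hij : i = j
  · subst hij
    exact ⟨.cons (adj_vVtx_wVtx i) .nil, by simp [Walk.cons_isPath_iff], by simp⟩
  refine ⟨.cons (adj_vVtx_wVtx i) (.cons (adj_wVtx_wVtx hij) .nil), ?_, ?_⟩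
  · simp [Walk.cons_isPath_iff, hij]
  · by_cases hi : i = i₀ <;> simp [hi]

theorem rainbowJoined_wVtx_wVtx {i j : Fin k} (hij : i ≠ j) :
    RainbowJoined (Gk k) (fiveColoring i₀) (wVtx i) (wVtx j) :=
  ⟨.cons (adj_wVtx_wVtx hij) .nil, by simp [Walk.cons_isPath_iff, hij], by simp⟩

theorem rainbowJoined_vVtx_vVtx {i j : Fin k} (hij : i ≠ j) :
    RainbowJoined (Gk k) (fiveColoring i₀) (vVtx i) (vVtx j) := by
  by_cases h₀ : i = i₀ ∨ j = i₀
  · refine ⟨.cons (adj_uVtx_vVtx i).symm (.cons (adj_uVtx_vVtx j) .nil), ?_, ?_⟩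
    · simp [Walk.cons_isPath_iff, hij]
    · rcases h₀ with rfl | rfl <;> simp [hij, Ne.symm hij]
  obtain ⟨hi, hj⟩ : i ≠ i₀ ∧ j ≠ i₀ := not_or.1 h₀
  refine ⟨.cons (adj_uVtx_vVtx i).symm (.cons (adj_uVtx_vVtx i₀) (.cons (adj_vVtx_wVtx i₀)
    (.cons (adj_wVtx_wVtx (Ne.symm hj)) (.cons (adj_vVtx_wVtx j).symm .nil)))), ?_, ?_⟩
  · simp [Walk.cons_isPath_iff, hij, hi, Ne.symm hj]
  · simp [hi, hj]

theorem rainbowConnected_fiveColoring : RainbowConnected (Gk k) (fiveColoring i₀) := by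
  rintro (_ | i | i) (_ | j | j) hxy
  · exact absurd rfl hxy
  · exact rainbowJoined_uVtx_vVtx i₀ j
  · exact rainbowJoined_uVtx_wVtx i₀ j
  · exact (rainbowJoined_uVtx_vVtx i₀ i).symm
  · exact rainbowJoined_vVtx_vVtx i₀ (by rintro rfl; exact hxy rfl)
  · exact rainbowJoined_vVtx_wVtx i₀ i j
  · exact (rainbowJoined_uVtx_wVtx i₀ i).symm
  · exact (rainbowJoined_vVtx_wVtx i₀ j i).symm
  · exact rainbowJoined_wVtx_wVtx i₀ (by rintro rfl; exact hxy rfl)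

end FiveColoring

end Gk

/-- For every integer `k ≥ 17`, `rc(G_k) = 5`: some edge coloring of `G_k` with 5 colors
makes it rainbow connected, but no edge coloring with 4 colors does. -/
theorem Gk_rc_eq_five (k : ℕ) (hk : 17 ≤ k) :
    (∃ c : Sym2 (Vk k) → Fin 5, RainbowConnected (Gk k) c) ∧
    (∀ c : Sym2 (Vk k) → Fin 4, ¬ RainbowConnected (Gk k) c) :=
  ⟨⟨Gk.fiveColoring ⟨0, by omega⟩, Gk.rainbowConnected_fiveColoring _⟩,
    Gk.not_rainbowConnected (Fintype.card_fin 4).le (by rw [Fintype.card_fin]; omega)⟩
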